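/- arXiv:0912.2545 — 2 statements merged into one kernel-verified Lean document; each statement's English description precedes it below -/
import Mathlib

section
/- Let W be the symmetric group Sₙ acting on ℂ[t₁,...,tₙ] by permuting variables, and let W_J = ⟨sᵢ : i ∈ J⟩ for a subset J ⊆ {1,...,n-1}. If w is the minimal-length representative of its left coset wW_J (i.e., wsᵢ > w for all i ∈ J), then every reduced word for w, restricted as in Billey's formula, gives localizations that are W_J-right-invariant; concretely: if wsᵢ > w in Bruhat order for a simple reflection sᵢ, then for every permutation v, every reduced word b₁⋯b_l of v and every reduced word b₁⋯b_l sᵢ of vsᵢ yield Billey polynomial values satisfying p_w(v) = p_w(vsᵢ), where p_w(v) = Σ over subwords b_{i₁}⋯b_{i_k} ∈ R(w) of r_b(i₁)⋯r_b(i_k) with r_b(i) = b₁⋯b_{i-1}(αᵢ). -/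
open MvPolynomial

noncomputable section
open scoped Classical

/-- The simple reflection `sⱼ = (j, j+1)` in `Sₙ` (the identity for out-of-range `j`). -/
def sgen (n j : ℕ) : Equiv.Perm (Fin n) :=
  if h : j + 1 < n then Equiv.swap ⟨j, Nat.lt_of_succ_lt h⟩ ⟨j + 1, h⟩ else 1

/-- The product of the word `b` of simple reflections. -/
def wprod (n : ℕ) (b : List ℕ) : Equiv.Perm (Fin n) := (b.map (sgen n)).prod

/-- The Coxeter length of `w ∈ Sₙ`: minimal length of a word of simple reflections
with product `w`. -/
def clen (n : ℕ) (w : Equiv.Perm (Fin n)) : ℕ :=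
  sInf {l | ∃ b : List ℕ, wprod n b = w ∧ b.length = l}

/-- `b` is a reduced word for `w`. -/
def IsReducedWord (n : ℕ) (b : List ℕ) (w : Equiv.Perm (Fin n)) : Prop :=
  wprod n b = w ∧ b.length = clen n w

/-- The simple root `αⱼ = tⱼ - tⱼ₊₁` (zero for out-of-range `j`). -/
def sroot (n j : ℕ) : MvPolynomial (Fin n) ℂ :=
  if h : j + 1 < n then X ⟨j, Nat.lt_of_succ_lt h⟩ - X ⟨j + 1, h⟩ else 0

/-- Billey's polynomial `p_w(b)` for a word `b = b₁⋯b_l`: the sum over all increasing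
sequences of positions `i₁ < ⋯ < i_k` such that `b_{i₁}⋯b_{i_k}` is a reduced word for `w`
of the products `r_b(i₁)⋯r_b(i_k)`, where `r_b(i) = (b₁⋯b_{i-1})(α_{b_i})`. -/
def billey (n : ℕ) (w : Equiv.Perm (Fin n)) (b : List ℕ) : MvPolynomial (Fin n) ℂ :=
  (((List.range b.length).sublists).map (fun c =>
    if IsReducedWord n (c.map fun i => b.getD i 0) w then
      (c.map fun i => rename (⇑(wprod n (b.take i))) (sroot n (b.getD i 0))).prod
    else 0)).sum

lemma not_red_concat (n i : ℕ) (hi : i + 1 < n) (w : Equiv.Perm (Fin n))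
    (hw : clen n (w * sgen n i) = clen n w + 1) (u : List ℕ) :
    ¬ IsReducedWord n (u ++ [i]) w := by
  rintro ⟨hp, hl⟩
  have hsq : sgen n i * sgen n i = 1 := by
    simp [sgen, hi]
  have hup : wprod n (u ++ [i]) = wprod n u * sgen n i := by
    simp [wprod]
  have hu : wprod n u = w * sgen n i := by
    rw [hup] at hp
    rw [← hp, mul_assoc, hsq, mul_one]
  have h1 : clen n (w * sgen n i) ≤ u.length := by
    rw [← hu]; exact Nat.sInf_le ⟨u, rfl, rfl⟩
  simp only [List.length_append, List.length_singleton] at hl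
  omega

/-- if `w sᵢ > w` in Bruhat order (equivalently `ℓ(w sᵢ) = ℓ(w) + 1`), then
for every `v`, every reduced word `b` for `v` and every reduced word `b ++ [i]` for `v sᵢ`,
the Billey polynomial values agree: `p_w(v) = p_w(v sᵢ)`. -/
theorem billey_right_invariant (n i : ℕ) (hi : i + 1 < n) (w v : Equiv.Perm (Fin n))
    (hw : clen n (w * sgen n i) = clen n w + 1)
    (b : List ℕ) (hb : IsReducedWord n b v)
    (hb' : IsReducedWord n (b ++ [i]) (v * sgen n i)) :
    billey n w b = billey n w (b ++ [i]) := by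
  unfold billey
  have hlen : (b ++ [i]).length = b.length + 1 := by simp
  rw [hlen, List.range_succ, List.sublists_concat, List.map_append, List.sum_append,
    List.map_map]
  have h2 : (((List.range b.length).sublists).map
      ((fun c =>
        if IsReducedWord n (c.map fun j => (b ++ [i]).getD j 0) w then
          (c.map fun j => rename (⇑(wprod n ((b ++ [i]).take j))) (sroot n ((b ++ [i]).getD j 0))).prod
        else 0) ∘ (fun c => c ++ [b.length]))).sum = 0 := by
    apply List.sum_eq_zero
    intro x hx
    simp only [List.mem_map, Function.comp] at hx
    obtain ⟨c, _, rfl⟩ := hx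
    have heq : ((c ++ [b.length]).map fun j => (b ++ [i]).getD j 0) =
        (c.map fun j => (b ++ [i]).getD j 0) ++ [i] := by
      rw [List.map_append]
      simp [List.getD_append_right]
    rw [if_neg (heq ▸ not_red_concat n i hi w hw _)]
  rw [h2, add_zero]
  apply congrArg
  apply List.map_congr_left
  intro c hc
  have hcmem : ∀ j ∈ c, j < b.length := by
    intro j hj
    have := (List.mem_sublists.mp hc).subset hj
    simpa using this
  have e1 : (c.map fun j => (b ++ [i]).getD j 0) = c.map fun j => b.getD j 0 := by
    apply List.map_congr_left
    intro j hj
    exact List.getD_append _ _ _ _ (hcmem j hj)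
  have e2 : (c.map fun j => rename (⇑(wprod n ((b ++ [i]).take j))) (sroot n ((b ++ [i]).getD j 0))) =
      c.map fun j => rename (⇑(wprod n (b.take j))) (sroot n (b.getD j 0)) := by
    apply List.map_congr_left
    intro j hj
    rw [List.getD_append _ _ _ _ (hcmem j hj),
      List.take_append_of_le_length (le_of_lt (hcmem j hj))]
  rw [e1, e2]
end
end

section
/- In the symmetric group Sₙ, a subset S of the positive roots {tᵢ - tⱼ : i < j} is the inversion set Inv(w) of some permutation w if and only if S is 'closed' and 'coclosed': (1) if α, β ∈ S and α + β is a positive root then α + β ∈ S, and (2) if α, β are positive roots not in S and α + β is a positive root then α + β ∉ S. -/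
/-!
A permutation is determined by the relative order in which the values `1, …, n` appear in its
one-line notation, and `tᵢ - tⱼ` is an inversion exactly when `j` appears before `i`. So a set `S`
of positive roots is an inversion set iff "`j` precedes `i` iff `i < j` and `tᵢ - tⱼ ∈ S`" defines a
strict total order on the values. Irreflexivity and totality are automatic, transitivity follows
from closedness and coclosedness, and a strict total order on `Fin n` is realised by a permutation.
-/

/-- The inversion set of `w ∈ Sₙ`: positive roots `tᵢ - tⱼ` (pairs `(i,j)`, `i < j`)
with `w⁻¹(i) > w⁻¹(j)`. -/
def invSet (n : ℕ) (w : Equiv.Perm (Fin n)) : Set (Fin n × Fin n) :=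
  {p | p.1 < p.2 ∧ w⁻¹ p.2 < w⁻¹ p.1}

section RootSet

variable {α : Type*} [LinearOrder α]

def IsClosedRootSet (S : Set (α × α)) : Prop :=
  ∀ a b c : α, a < b → b < c → (a, b) ∈ S → (b, c) ∈ S → (a, c) ∈ S

def IsCoclosedRootSet (S : Set (α × α)) : Prop :=
  ∀ a b c : α, a < b → b < c → (a, b) ∉ S → (b, c) ∉ S → (a, c) ∉ S

/-- `a` precedes `b` in the one-line notation of a permutation with inversion set `S`. -/
def Precedes (S : Set (α × α)) (a b : α) : Prop :=
  (a < b ∧ (a, b) ∉ S) ∨ (b < a ∧ (b, a) ∈ S)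

variable {S : Set (α × α)}

theorem precedes_irrefl (a : α) : ¬ Precedes S a a := by
  rintro (⟨h, -⟩ | ⟨h, -⟩) <;> exact lt_irrefl a h

theorem precedes_trichotomous (a b : α) (hab : ¬ Precedes S a b) (hba : ¬ Precedes S b a) :
    a = b := by
  by_contra hne
  rcases Ne.lt_or_gt hne with h | h
  · by_cases hS : (a, b) ∈ S
    exacts [hba (.inr ⟨h, hS⟩), hab (.inl ⟨h, hS⟩)]
  · by_cases hS : (b, a) ∈ S
    exacts [hab (.inr ⟨h, hS⟩), hba (.inl ⟨h, hS⟩)]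

theorem precedes_trans (hcl : IsClosedRootSet S) (hco : IsCoclosedRootSet S) {a b c : α} :
    Precedes S a b → Precedes S b c → Precedes S a c := by
  rintro (⟨hab, hnab⟩ | ⟨hba, hba'⟩) (⟨hbc, hnbc⟩ | ⟨hcb, hcb'⟩)
  · exact .inl ⟨hab.trans hbc, hco a b c hab hbc hnab hnbc⟩
  · rcases lt_trichotomy a c with h | rfl | h
    · exact .inl ⟨h, fun hac => hnab (hcl a c b h hcb hac hcb')⟩
    · exact absurd hcb' hnab
    · exact .inr ⟨h, by_contra fun hnca => hco c a b h hab hnca hnab hcb'⟩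
  · rcases lt_trichotomy a c with h | rfl | h
    · exact .inl ⟨h, fun hac => hnbc (hcl b a c hba h hba' hac)⟩
    · exact absurd hba' hnbc
    · exact .inr ⟨h, by_contra fun hnca => hco b c a hbc h hnbc hnca hba'⟩
  · exact .inr ⟨hcb.trans hba, hcl c b a hcb hba hcb' hba'⟩

theorem isStrictTotalOrder_precedes (hcl : IsClosedRootSet S) (hco : IsCoclosedRootSet S) :
    IsStrictTotalOrder α (Precedes S) where
  trichotomous := precedes_trichotomous
  irrefl := precedes_irrefl
  trans _ _ _ := precedes_trans hcl hco

theorem eq_setOf_precedes (hS : ∀ p ∈ S, p.1 < p.2) :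
    S = {p | p.1 < p.2 ∧ Precedes S p.2 p.1} := by
  ext ⟨a, b⟩
  refine ⟨fun h => ⟨hS _ h, .inr ⟨hS _ h, h⟩⟩, ?_⟩
  rintro ⟨hab, ⟨hba, -⟩ | ⟨-, h⟩⟩
  exacts [absurd hab hba.asymm, h]

end RootSet

theorem exists_equiv_fin_lt_iff {α : Type*} [Fintype α] (r : α → α → Prop)
    [IsStrictTotalOrder α r] {k : ℕ} (h : Fintype.card α = k) :
    ∃ e : α ≃ Fin k, ∀ a b, e a < e b ↔ r a b := by
  classical
  let := linearOrderOfSTO r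
  exact ⟨(monoEquivOfFin α h).symm.toEquiv, fun a b => (monoEquivOfFin α h).symm.lt_iff_lt⟩

theorem invSet_isClosedRootSet (n : ℕ) (w : Equiv.Perm (Fin n)) :
    IsClosedRootSet (invSet n w) := by
  rintro a b c hab hbc ⟨-, h₁⟩ ⟨-, h₂⟩
  exact ⟨hab.trans hbc, h₂.trans h₁⟩

theorem invSet_isCoclosedRootSet (n : ℕ) (w : Equiv.Perm (Fin n)) :
    IsCoclosedRootSet (invSet n w) := by
  rintro a b c hab hbc h₁ h₂ ⟨-, h₃⟩
  have hab' : w⁻¹ a ≤ w⁻¹ b := le_of_not_gt fun h => h₁ ⟨hab, h⟩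
  have hbc' : w⁻¹ b ≤ w⁻¹ c := le_of_not_gt fun h => h₂ ⟨hbc, h⟩
  exact (hab'.trans hbc').not_gt h₃

/-- a subset `S` of the positive roots `{tᵢ - tⱼ : i < j}` of type `A_{n-1}`
is the inversion set of some permutation `w ∈ Sₙ` if and only if `S` is closed
(if `α, β ∈ S` and `α + β` is a root then `α + β ∈ S`) and coclosed (if `α, β ∉ S` are
positive roots and `α + β` is a root then `α + β ∉ S`), where
`(tₐ - t_b) + (t_b - t_c) = tₐ - t_c`. -/
theorem inversion_set_iff_closed_coclosed (n : ℕ) (S : Set (Fin n × Fin n))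
    (hS : ∀ p ∈ S, p.1 < p.2) :
    (∃ w : Equiv.Perm (Fin n), S = invSet n w) ↔
      ((∀ a b c : Fin n, a < b → b < c → (a, b) ∈ S → (b, c) ∈ S → (a, c) ∈ S) ∧
       (∀ a b c : Fin n, a < b → b < c → (a, b) ∉ S → (b, c) ∉ S → (a, c) ∉ S)) := by
  refine ⟨?_, fun ⟨hcl, hco⟩ => ?_⟩
  · rintro ⟨w, rfl⟩
    exact ⟨invSet_isClosedRootSet n w, invSet_isCoclosedRootSet n w⟩
  · have := isStrictTotalOrder_precedes (S := S) hcl hco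
    obtain ⟨σ, hσ⟩ := exists_equiv_fin_lt_iff (Precedes S) (Fintype.card_fin n)
    refine ⟨σ⁻¹, ?_⟩
    simp only [invSet, inv_inv, hσ]
    exact eq_setOf_precedes hS
end
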